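/- arXiv:2409.13491 — 3 statements merged into one kernel-verified Lean document; each statement's English description precedes it below -/
import Mathlib

section
/- Let G be a simple graph on n ≥ 3 vertices. If every two nonadjacent vertices of G have degree sum at least n, then G is Hamiltonian (contains a cycle through all vertices). -/
/-!
If a Hamiltonian path runs from `u` to `v` and `deg u + deg v ≥ n`, then, since the path has only
`n - 1` edges, one of its edges `xᵢxᵢ₊₁` has `u ~ xᵢ₊₁` and `xᵢ ~ v`; trading it for these two
edges closes a Hamiltonian cycle. Hence, if `deg u + deg v ≥ n`, then `G` is Hamiltonian as soon
as `G + uv` is: a Hamiltonian cycle through `uv` leaves a Hamiltonian `u`–`v` path of `G`.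
Ore's condition survives adding edges, so a downward induction from the complete graph finishes
the proof.
-/

open Finset

namespace SimpleGraph

variable {V : Type*} {G : SimpleGraph V}

lemma isHamiltonian_top [Fintype V] [DecidableEq V] (hV : 3 ≤ Fintype.card V) :
    (⊤ : SimpleGraph V).IsHamiltonian := by
  intro _
  have hcopy : cycleGraph (Fintype.card V) ⊑ (⊤ : SimpleGraph V) := by
    rw [← completeGraph_eq_top, isContained_top_iff]
    exact ⟨(Fintype.equivFin V).symm.toEmbedding⟩
  obtain ⟨a, p, hp, hlen⟩ := (cycleGraph_isContained_iff (by omega)).mp hcopy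
  exact ⟨a, p, Walk.isHamiltonianCycle_iff_isCycle_and_length_eq.mpr ⟨hp, hlen⟩⟩

namespace Walk

lemma exists_adj_getVert_succ_and_adj_getVert [Fintype V] [DecidableRel G.Adj] {u v : V}
    (p : G.Walk u v) (hp : ∀ w, w ∈ p.support) (h : p.length < G.degree u + G.degree v) :
    ∃ i < p.length, G.Adj u (p.getVert (i + 1)) ∧ G.Adj (p.getVert i) v := by
  set S := {i ∈ range p.length | G.Adj u (p.getVert (i + 1))}
  set T := {i ∈ range p.length | G.Adj (p.getVert i) v}
  have hS : G.degree u ≤ #S := by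
    rw [← card_neighborFinset_eq_degree]
    refine card_le_card_of_surjOn (fun i ↦ p.getVert (i + 1)) fun w hw ↦ ?_
    obtain ⟨j, rfl, hj⟩ := mem_support_iff_exists_getVert.mp (hp w)
    rw [mem_coe, mem_neighborFinset] at hw
    obtain ⟨i, rfl⟩ := Nat.exists_eq_succ_of_ne_zero (by rintro rfl; simp at hw : j ≠ 0)
    exact ⟨i, mem_filter.mpr ⟨mem_range.mpr (by omega), hw⟩, rfl⟩
  have hT : G.degree v ≤ #T := by
    rw [← card_neighborFinset_eq_degree]
    refine card_le_card_of_surjOn p.getVert fun w hw ↦ ?_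
    obtain ⟨j, rfl, hj⟩ := mem_support_iff_exists_getVert.mp (hp w)
    rw [mem_coe, mem_neighborFinset] at hw
    have hjl : j ≠ p.length := by rintro rfl; simp at hw
    exact ⟨j, mem_filter.mpr ⟨mem_range.mpr (by omega), hw.symm⟩, rfl⟩
  obtain ⟨i, hi⟩ : (S ∩ T).Nonempty := by
    rw [← card_pos]
    have hST : #(S ∪ T) ≤ p.length :=
      (card_le_card (union_subset (filter_subset _ _) (filter_subset _ _))).trans (card_range _).le
    have := card_union_add_card_inter S T
    omega
  simp only [S, T, mem_inter, mem_filter, mem_range] at hi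
  exact ⟨i, hi.1.1, hi.1.2, hi.2.2⟩

lemma support_drop_append_cons_reverse_take {u v : V} (p : G.Walk u v) {i : ℕ}
    (hi : i < p.length) (h : G.Adj v (p.getVert i)) :
    ((p.drop (i + 1)).append (cons h (p.take i).reverse)).support.Perm p.support := by
  rw [support_append, support_cons, List.tail_cons, support_reverse, support_take,
    drop_support_eq_support_drop_min, min_eq_left (by omega)]
  refine List.perm_append_comm.trans ?_
  conv_rhs => rw [← List.take_append_drop (i + 1) p.support]
  exact (List.reverse_perm _).append_right _

lemma IsCycle.snd_eq_or_penultimate_eq_of_mem_edges {u v : V} {c : G.Walk u u} (hc : c.IsCycle)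
    (h : s(u, v) ∈ c.edges) : c.snd = v ∨ c.penultimate = v := by
  rw [← cons_tail_eq c hc.not_nil, edges_cons, List.mem_cons] at h
  refine h.imp (fun h ↦ (Sym2.congr_right.mp h).symm) fun h ↦ ?_
  rw [hc.isPath_tail.eq_penultimate_of_mem_edges h]
  have := hc.three_le_length
  simp only [penultimate, tail, drop_getVert, drop_length]
  congr 1
  omega

lemma edges_subset_edgeSet_of_sup_edge {u v x y : V} (p : (G ⊔ edge u v).Walk x y)
    (h : s(u, v) ∉ p.edges) : ∀ e ∈ p.edges, e ∈ G.edgeSet := by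
  intro e he
  rcases (edgeSet_sup G (edge u v)).subset (p.edges_subset_edgeSet he) with hG | huv
  · exact hG
  · exact absurd (edgeSet_edge_subset huv ▸ he) h

variable [DecidableEq V]

lemma IsHamiltonian.drop_append_cons_reverse_take {u v : V} {p : G.Walk u v}
    (hp : p.IsHamiltonian) {i : ℕ} (hi : i < p.length) (h : G.Adj v (p.getVert i)) :
    ((p.drop (i + 1)).append (cons h (p.take i).reverse)).IsHamiltonian := fun a ↦ by
  rw [(p.support_drop_append_cons_reverse_take hi h).count_eq]
  exact hp a

lemma IsHamiltonian.transfer {H : SimpleGraph V} {u v : V} {p : G.Walk u v}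
    (hp : p.IsHamiltonian) (hH : ∀ e ∈ p.edges, e ∈ H.edgeSet) :
    (p.transfer H hH).IsHamiltonian :=
  fun a ↦ by rw [support_transfer]; exact hp a

variable [Fintype V]

lemma IsHamiltonian.isHamiltonianCycle_cons {u v : V} {q : G.Walk v u} (hq : q.IsHamiltonian)
    (h : G.Adj u v) (hV : 3 ≤ Fintype.card V) : (cons h q).IsHamiltonianCycle := by
  refine isHamiltonianCycle_isCycle_and_isHamiltonian_tail.mpr
    ⟨?_, by simpa [IsHamiltonian] using hq⟩
  refine (cons_isCycle_iff q h).mpr ⟨hq.isPath, fun he ↦ ?_⟩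
  have := hq.isPath.length_eq_one_of_mem_edges (Sym2.eq_swap ▸ he)
  have := hq.length_eq
  omega

theorem IsHamiltonian.isHamiltonian_of_card_le_degree_add_degree [DecidableRel G.Adj]
    {u v : V} {p : G.Walk u v} (hp : p.IsHamiltonian) (hV : 3 ≤ Fintype.card V)
    (hdeg : Fintype.card V ≤ G.degree u + G.degree v) : G.IsHamiltonian := by
  have hlen := hp.length_eq
  obtain ⟨i, hi, hu, hv⟩ := p.exists_adj_getVert_succ_and_adj_getVert hp.mem_support (by omega)
  exact fun _ ↦ ⟨u, _, (hp.drop_append_cons_reverse_take hi hv.symm).isHamiltonianCycle_cons hu hV⟩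

lemma IsHamiltonianCycle.reverse {u : V} {c : G.Walk u u} (hc : c.IsHamiltonianCycle) :
    c.reverse.IsHamiltonianCycle := by
  rw [isHamiltonianCycle_iff_isCycle_and_length_eq] at hc ⊢
  exact ⟨hc.1.reverse, by rw [length_reverse, hc.2]⟩

lemma IsHamiltonianCycle.transfer {H : SimpleGraph V} {u : V} {c : G.Walk u u}
    (hc : c.IsHamiltonianCycle) (hH : ∀ e ∈ c.edges, e ∈ H.edgeSet) :
    (c.transfer H hH).IsHamiltonianCycle := by
  rw [isHamiltonianCycle_iff_isCycle_and_length_eq] at hc ⊢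
  exact ⟨hc.1.transfer hH, by rw [length_transfer, hc.2]⟩

lemma IsHamiltonianCycle.exists_isHamiltonian_notMem_edges {u v : V} {c : G.Walk u u}
    (hc : c.IsHamiltonianCycle) (h : s(u, v) ∈ c.edges) :
    ∃ p : G.Walk v u, p.IsHamiltonian ∧ s(u, v) ∉ p.edges := by
  wlog hsnd : c.snd = v generalizing c
  · refine this hc.reverse (by rwa [edges_reverse, List.mem_reverse]) ?_
    rw [snd_reverse]
    exact (hc.isCycle.snd_eq_or_penultimate_eq_of_mem_edges h).resolve_left hsnd
  subst hsnd
  refine ⟨c.tail, hc.isHamiltonian_tail, fun he ↦ ?_⟩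
  have hnodup := hc.isCycle.edges_nodup
  rw [← cons_tail_eq c hc.isCycle.not_nil, edges_cons] at hnodup
  exact (List.nodup_cons.mp hnodup).1 he

end Walk

theorem isHamiltonian_of_isHamiltonian_sup_edge [Fintype V] [DecidableEq V] [DecidableRel G.Adj]
    {u v : V} (hV : 3 ≤ Fintype.card V) (hdeg : Fintype.card V ≤ G.degree u + G.degree v)
    (h : (G ⊔ edge u v).IsHamiltonian) : G.IsHamiltonian := by
  have : Nontrivial V := Fintype.one_lt_card_iff_nontrivial.mp (by omega)
  obtain ⟨c, hc⟩ := h.exists_isHamiltonianCycle u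
  by_cases he : s(u, v) ∈ c.edges
  · obtain ⟨p, hp, hpe⟩ := hc.exists_isHamiltonian_notMem_edges he
    exact (hp.transfer (p.edges_subset_edgeSet_of_sup_edge hpe))
      |>.isHamiltonian_of_card_le_degree_add_degree hV (by rwa [add_comm])
  · exact fun _ ↦ ⟨u, _, hc.transfer (c.edges_subset_edgeSet_of_sup_edge he)⟩

end SimpleGraph

theorem ore_hamiltonian {V : Type*} [Fintype V] [DecidableEq V]
    (G : SimpleGraph V) [DecidableRel G.Adj]
    (hn : 3 ≤ Fintype.card V)
    (hdeg : ∀ u v : V, u ≠ v → ¬ G.Adj u v →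
      Fintype.card V ≤ G.degree u + G.degree v) :
    G.IsHamiltonian := by
  classical
  revert ‹DecidableRel G.Adj› hdeg
  induction G using WellFoundedGT.induction with | _ G ih
  intro _ hdeg
  by_cases hcomplete : ∀ u v : V, u ≠ v → G.Adj u v
  · exact (SimpleGraph.isHamiltonian_top hn).mono fun x y ↦ hcomplete x y
  push Not at hcomplete
  obtain ⟨u, v, huv, hnadj⟩ := hcomplete
  have hlt := SimpleGraph.lt_sup_edge G u v huv hnadj
  refine SimpleGraph.isHamiltonian_of_isHamiltonian_sup_edge hn (hdeg u v huv hnadj)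
    (ih _ hlt fun x y hxy hnadj' ↦ ?_)
  exact (hdeg x y hxy fun h ↦ hnadj' (hlt.le h)).trans
    (add_le_add (SimpleGraph.degree_le_of_le hlt.le) (SimpleGraph.degree_le_of_le hlt.le))
end

section
/- Let G be a connected simple graph and let z₁, z₂, z₃ be three distinct vertices of G. Then G contains an induced subgraph that is a generalized claw connecting z₁, z₂, z₃ or a generalized net connecting z₁, z₂, z₃. -/
/-- `G` contains an induced generalized claw connecting `z₁, z₂, z₃`:
three paths from a common origin `x` to `z₁, z₂, z₃`, pairwise sharing only `x`,
whose union is an induced subgraph of `G`. -/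
def HasInducedGeneralizedClaw {V : Type*} (G : SimpleGraph V) (z₁ z₂ z₃ : V) : Prop :=
  ∃ (x : V) (Q₁ : G.Walk x z₁) (Q₂ : G.Walk x z₂) (Q₃ : G.Walk x z₃),
    Q₁.IsPath ∧ Q₂.IsPath ∧ Q₃.IsPath ∧
    (∀ y, y ∈ Q₁.support → y ∈ Q₂.support → y = x) ∧
    (∀ y, y ∈ Q₁.support → y ∈ Q₃.support → y = x) ∧
    (∀ y, y ∈ Q₂.support → y ∈ Q₃.support → y = x) ∧
    (∀ a b : V, (a ∈ Q₁.support ∨ a ∈ Q₂.support ∨ a ∈ Q₃.support) →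
      (b ∈ Q₁.support ∨ b ∈ Q₂.support ∨ b ∈ Q₃.support) →
      (G.Adj a b ↔ s(a, b) ∈ Q₁.edges ∨ s(a, b) ∈ Q₂.edges ∨ s(a, b) ∈ Q₃.edges))

/-- `G` contains an induced generalized net connecting `z₁, z₂, z₃`:
a triangle `x₁x₂x₃` together with three pairwise disjoint paths `Qᵢ` from `xᵢ` to `zᵢ`,
whose union is an induced subgraph of `G`. -/
def HasInducedGeneralizedNet {V : Type*} (G : SimpleGraph V) (z₁ z₂ z₃ : V) : Prop :=
  ∃ (x₁ x₂ x₃ : V) (Q₁ : G.Walk x₁ z₁) (Q₂ : G.Walk x₂ z₂) (Q₃ : G.Walk x₃ z₃),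
    G.Adj x₁ x₂ ∧ G.Adj x₁ x₃ ∧ G.Adj x₂ x₃ ∧
    Q₁.IsPath ∧ Q₂.IsPath ∧ Q₃.IsPath ∧
    (∀ y, y ∈ Q₁.support → y ∉ Q₂.support) ∧
    (∀ y, y ∈ Q₁.support → y ∉ Q₃.support) ∧
    (∀ y, y ∈ Q₂.support → y ∉ Q₃.support) ∧
    (∀ a b : V, (a ∈ Q₁.support ∨ a ∈ Q₂.support ∨ a ∈ Q₃.support) →
      (b ∈ Q₁.support ∨ b ∈ Q₂.support ∨ b ∈ Q₃.support) →
      (G.Adj a b ↔ s(a, b) ∈ Q₁.edges ∨ s(a, b) ∈ Q₂.edges ∨ s(a, b) ∈ Q₃.edges ∨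
        s(a, b) = s(x₁, x₂) ∨ s(a, b) = s(x₁, x₃) ∨ s(a, b) = s(x₂, x₃)))

/-!
A shortest path `P` from `z₁` to `z₂` is chordless. If `z₃` lies on `P`, splitting `P` at `z₃`
gives a claw centred at `z₃`. Otherwise a shortest path from `P` to `z₃` leaves `P` at `t` and
continues along a path `Q` starting at a neighbour `u` of `t`; by minimality `Q` is chordless,
avoids `P`, and `u` is its only vertex with a neighbour on `P`. With `a` and `b` the first and
last neighbours of `u` along `P`, the segments `a … z₁` and `b … z₂` of `P` together with `Q`
are the legs of a claw centred at `a` if `a = b`, of a net on the triangle `a b u` if `a ~ b`,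
and of a claw centred at `u` otherwise.
-/

open SimpleGraph

namespace SimpleGraph.Walk

variable {V : Type*} {G : SimpleGraph V} {u v : V}

theorem mem_edges_of_length_le_one (p : G.Walk u v) (hne : u ≠ v) (hp : p.length ≤ 1) :
    s(u, v) ∈ p.edges := by
  cases p with
  | nil => exact absurd rfl hne
  | cons h q =>
    cases q with
    | nil => simp
    | cons _ _ => simp at hp

theorem mem_edges_of_length_eq_dist_of_append {a b : V} {p : G.Walk u a} {q : G.Walk a v}
    (hpq : (p.append q).length = G.dist u v) (hb : b ∈ q.support) (hab : G.Adj a b) :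
    s(a, b) ∈ q.edges := by
  obtain ⟨q₁, q₂, rfl⟩ := mem_support_iff_exists_append.mp hb
  have hshort := dist_le (p.append (q₂.cons hab))
  simp only [length_append, length_cons] at hpq hshort
  rw [edges_append]
  exact List.mem_append_left _ (q₁.mem_edges_of_length_le_one hab.ne (by omega))

theorem isChordless_of_length_eq_dist (p : G.Walk u v) (hp : p.length = G.dist u v) :
    p.IsChordless := by
  refine isChordless_iff_forall_mem_edges.mpr fun a b ha hb hab => ?_
  obtain ⟨p₁, p₂, rfl⟩ := mem_support_iff_exists_append.mp ha
  rcases (mem_support_append_iff _ _).mp hb with hb | hb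
  · have hrev : (p₂.reverse.append p₁.reverse).length = G.dist v u := by
      simpa [dist_comm, Nat.add_comm] using hp
    have := mem_edges_of_length_eq_dist_of_append hrev (by simpa using hb) hab
    simp_all [edges_append]
  · simp [edges_append, mem_edges_of_length_eq_dist_of_append hp hb hab]

theorem IsPath.eq_of_mem_support_append {w x : V} {p : G.Walk u v} {q : G.Walk v w}
    (hpq : (p.append q).IsPath) (hp : x ∈ p.support) (hq : x ∈ q.support) : x = v := by
  by_contra hx
  exact hpq.ne_of_mem_support_of_append hx hp hq rfl

theorem exists_eq_append_first (q : V → Prop) (w : G.Walk u v) (h : ∃ x ∈ w.support, q x) :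
    ∃ (a : V) (w₁ : G.Walk u a) (w₂ : G.Walk a v),
      w = w₁.append w₂ ∧ q a ∧ ∀ x ∈ w₁.support, q x → x = a := by
  classical
  induction w with
  | nil =>
    obtain ⟨x, hx, hqx⟩ := h
    rw [mem_support_nil_iff] at hx
    subst hx
    exact ⟨x, nil, nil, rfl, hqx, by simp⟩
  | @cons u' v' w' e p ih =>
    by_cases hu : q u'
    · exact ⟨u', nil, cons e p, rfl, hu, by simp⟩
    · have hp : ∃ x ∈ p.support, q x := by
        obtain ⟨x, hx, hqx⟩ := h
        rcases List.mem_cons.mp hx with rfl | hx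
        · exact absurd hqx hu
        · exact ⟨x, hx, hqx⟩
      obtain ⟨a, w₁, w₂, rfl, ha, hfirst⟩ := ih hp
      refine ⟨a, cons e w₁, w₂, rfl, ha, fun x hx hqx => ?_⟩
      rcases List.mem_cons.mp hx with rfl | hx
      · exact absurd hqx hu
      · exact hfirst x hx hqx

theorem exists_eq_append_last (q : V → Prop) (w : G.Walk u v) (h : ∃ x ∈ w.support, q x) :
    ∃ (b : V) (w₁ : G.Walk u b) (w₂ : G.Walk b v),
      w = w₁.append w₂ ∧ q b ∧ ∀ x ∈ w₂.support, q x → x = b := by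
  obtain ⟨b, w₁, w₂, hw, hb, hlast⟩ := exists_eq_append_first q w.reverse (by simpa using h)
  refine ⟨b, w₂.reverse, w₁.reverse, ?_, hb, fun x hx => hlast x (by simpa using hx)⟩
  rw [← reverse_append, ← hw, reverse_reverse]

end SimpleGraph.Walk

namespace ClawNet

open Walk

variable {V : Type*} {G : SimpleGraph V} {z₁ z₂ z₃ : V}

theorem hasInducedGeneralizedClaw_of_forall_adj {x : V} {Q₁ : G.Walk x z₁} {Q₂ : G.Walk x z₂}
    {Q₃ : G.Walk x z₃} (h₁ : Q₁.IsPath) (h₂ : Q₂.IsPath) (h₃ : Q₃.IsPath)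
    (h₁₂ : ∀ y ∈ Q₁.support, y ∈ Q₂.support → y = x)
    (h₁₃ : ∀ y ∈ Q₁.support, y ∈ Q₃.support → y = x)
    (h₂₃ : ∀ y ∈ Q₂.support, y ∈ Q₃.support → y = x)
    (hind : ∀ a b : V, (a ∈ Q₁.support ∨ a ∈ Q₂.support ∨ a ∈ Q₃.support) →
      (b ∈ Q₁.support ∨ b ∈ Q₂.support ∨ b ∈ Q₃.support) → G.Adj a b →
      s(a, b) ∈ Q₁.edges ∨ s(a, b) ∈ Q₂.edges ∨ s(a, b) ∈ Q₃.edges) :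
    HasInducedGeneralizedClaw G z₁ z₂ z₃ :=
  ⟨x, Q₁, Q₂, Q₃, h₁, h₂, h₃, h₁₂, h₁₃, h₂₃, fun a b ha hb =>
    ⟨hind a b ha hb, by rintro (h | h | h) <;> exact adj_of_mem_edges _ h⟩⟩

/-- The sides of the triangle `a b u` are allowed, not required, to be edges of `G`. -/
def IsInducedLegs {a b u : V} (P₁ : G.Walk a z₁) (P₂ : G.Walk b z₂) (Q : G.Walk u z₃) : Prop :=
  ∀ α β : V, (α ∈ P₁.support ∨ α ∈ P₂.support ∨ α ∈ Q.support) →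
    (β ∈ P₁.support ∨ β ∈ P₂.support ∨ β ∈ Q.support) → G.Adj α β →
    s(α, β) ∈ P₁.edges ∨ s(α, β) ∈ P₂.edges ∨ s(α, β) ∈ Q.edges ∨
      s(α, β) = s(a, b) ∨ s(α, β) = s(a, u) ∨ s(α, β) = s(b, u)

namespace IsInducedLegs

variable {a b u : V} {P₁ : G.Walk a z₁} {P₂ : G.Walk b z₂} {Q : G.Walk u z₃}

theorem hasInducedGeneralizedClaw_of_eq (hind : IsInducedLegs P₁ P₂ Q)
    (h₁ : P₁.IsPath) (h₂ : P₂.IsPath) (h₃ : Q.IsPath) (hab : a = b)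
    (h₁₂ : ∀ y ∈ P₁.support, y ∈ P₂.support → y = a)
    (h₁₃ : ∀ y ∈ P₁.support, y ∉ Q.support) (h₂₃ : ∀ y ∈ P₂.support, y ∉ Q.support)
    (hau : G.Adj a u) : HasInducedGeneralizedClaw G z₁ z₂ z₃ := by
  subst hab
  refine hasInducedGeneralizedClaw_of_forall_adj (Q₃ := cons hau Q) h₁ h₂
    (h₃.cons (h₁₃ a P₁.start_mem_support)) h₁₂ ?_ ?_ fun α β hα hβ hαβ => ?_
  · simp only [support_cons, List.mem_cons]
    exact fun y hy hyQ => hyQ.resolve_right (h₁₃ y hy)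
  · simp only [support_cons, List.mem_cons]
    exact fun y hy hyQ => hyQ.resolve_right (h₂₃ y hy)
  simp only [support_cons, List.mem_cons, edges_cons] at hα hβ ⊢
  have hP₁a := P₁.start_mem_support
  rcases hind α β (by aesop) (by aesop) hαβ with h | h | h | h | h | h
  · exact Or.inl h
  · exact Or.inr (Or.inl h)
  · exact Or.inr (Or.inr (Or.inr h))
  · obtain ⟨rfl, rfl⟩ := Sym2.eq_iff.mp h |>.elim id id
    exact absurd hαβ G.irrefl
  all_goals exact Or.inr (Or.inr (Or.inl h))

theorem hasInducedGeneralizedNet (hind : IsInducedLegs P₁ P₂ Q)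
    (h₁ : P₁.IsPath) (h₂ : P₂.IsPath) (h₃ : Q.IsPath) (h₁₂ : ∀ y ∈ P₁.support, y ∉ P₂.support)
    (h₁₃ : ∀ y ∈ P₁.support, y ∉ Q.support) (h₂₃ : ∀ y ∈ P₂.support, y ∉ Q.support)
    (hab : G.Adj a b) (hau : G.Adj a u) (hbu : G.Adj b u) :
    HasInducedGeneralizedNet G z₁ z₂ z₃ := by
  refine ⟨a, b, u, P₁, P₂, Q, hab, hau, hbu, h₁, h₂, h₃, h₁₂, h₁₃, h₂₃,
    fun α β hα hβ => ⟨hind α β hα hβ, ?_⟩⟩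
  rintro (h | h | h | h | h | h)
  any_goals exact adj_of_mem_edges _ h
  all_goals rw [← G.mem_edgeSet, h]; assumption

theorem hasInducedGeneralizedClaw_of_not_adj (hind : IsInducedLegs P₁ P₂ Q)
    (h₁ : P₁.IsPath) (h₂ : P₂.IsPath) (h₃ : Q.IsPath) (h₁₂ : ∀ y ∈ P₁.support, y ∉ P₂.support)
    (h₁₃ : ∀ y ∈ P₁.support, y ∉ Q.support) (h₂₃ : ∀ y ∈ P₂.support, y ∉ Q.support)
    (hab : ¬G.Adj a b) (hau : G.Adj a u) (hbu : G.Adj b u) :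
    HasInducedGeneralizedClaw G z₁ z₂ z₃ := by
  have huQ := Q.start_mem_support
  refine hasInducedGeneralizedClaw_of_forall_adj (Q₁ := cons hau.symm P₁)
    (Q₂ := cons hbu.symm P₂) (h₁.cons fun hu => h₁₃ u hu huQ) (h₂.cons fun hu => h₂₃ u hu huQ) h₃
    ?_ ?_ ?_ fun α β hα hβ hαβ => ?_
  all_goals simp only [support_cons, List.mem_cons, edges_cons] at *
  · rintro y (hy | hy₁) (hy | hy₂)
    all_goals first | assumption | exact absurd hy₂ (h₁₂ y hy₁)
  · rintro y (hy | hy₁) hy₃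
    exacts [hy, absurd hy₃ (h₁₃ y hy₁)]
  · rintro y (hy | hy₂) hy₃
    exacts [hy, absurd hy₃ (h₂₃ y hy₂)]
  rcases hind α β (by aesop) (by aesop) hαβ with h | h | h | h | h | h
  · exact Or.inl (Or.inr h)
  · exact Or.inr (Or.inl (Or.inr h))
  · exact Or.inr (Or.inr h)
  · exact absurd (G.mem_edgeSet.mp (h ▸ G.mem_edgeSet.mpr hαβ)) hab
  · exact Or.inl (Or.inl (h.trans Sym2.eq_swap))
  · exact Or.inr (Or.inl (Or.inl (h.trans Sym2.eq_swap)))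

end IsInducedLegs

theorem IsInducedLegs.hasInducedGeneralizedClaw_or_net {a b u : V} {P₁ : G.Walk a z₁}
    {P₂ : G.Walk b z₂} {Q : G.Walk u z₃} (hind : IsInducedLegs P₁ P₂ Q)
    (h₁ : P₁.IsPath) (h₂ : P₂.IsPath) (h₃ : Q.IsPath)
    (h₁₂ : ∀ y ∈ P₁.support, y ∈ P₂.support → y = a ∧ y = b)
    (h₁₃ : ∀ y ∈ P₁.support, y ∉ Q.support) (h₂₃ : ∀ y ∈ P₂.support, y ∉ Q.support)
    (hau : G.Adj a u) (hbu : G.Adj b u) :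
    HasInducedGeneralizedClaw G z₁ z₂ z₃ ∨ HasInducedGeneralizedNet G z₁ z₂ z₃ := by
  by_cases heq : a = b
  · exact Or.inl <| hind.hasInducedGeneralizedClaw_of_eq h₁ h₂ h₃ heq
      (fun y hy₁ hy₂ => (h₁₂ y hy₁ hy₂).1) h₁₃ h₂₃ hau
  have h₁₂' : ∀ y ∈ P₁.support, y ∉ P₂.support := fun y hy₁ hy₂ =>
    heq <| (h₁₂ y hy₁ hy₂).1.symm.trans (h₁₂ y hy₁ hy₂).2
  by_cases hab : G.Adj a b
  · exact Or.inr <| hind.hasInducedGeneralizedNet h₁ h₂ h₃ h₁₂' h₁₃ h₂₃ hab hau hbu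
  · exact Or.inl <| hind.hasInducedGeneralizedClaw_of_not_adj h₁ h₂ h₃ h₁₂' h₁₃ h₂₃ hab hau hbu

theorem isInducedLegs_of_append {a b u : V} {P₁ : G.Walk z₁ a} {B₁ : G.Walk a b}
    {B₂ : G.Walk b z₂} {Q : G.Walk u z₃} (hP : (P₁.append (B₁.append B₂)).IsPath)
    (hPc : (P₁.append (B₁.append B₂)).IsChordless) (hQc : Q.IsChordless)
    (hnbr : ∀ y ∈ Q.support, ∀ p ∈ (P₁.append (B₁.append B₂)).support, G.Adj y p → y = u)
    (hfirst : ∀ x ∈ P₁.support, G.Adj u x → x = a) (hlast : ∀ x ∈ B₂.support, G.Adj u x → x = b) :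
    IsInducedLegs P₁.reverse B₂ Q := by
  have hP₂ : (B₁.append B₂).IsPath := hP.of_append_right
  have mem_P : ∀ γ, γ ∈ P₁.support ∨ γ ∈ B₂.support → γ ∈ (P₁.append (B₁.append B₂)).support := by
    intro γ hγ; simp only [mem_support_append_iff]; tauto
  have mem_B₁ : ∀ γ, γ ∈ P₁.support ∨ γ ∈ B₂.support → γ ∈ B₁.support → γ = a ∨ γ = b := by
    rintro γ (hγ | hγ) hγ₁
    · exact Or.inl (hP.eq_of_mem_support_append hγ ((mem_support_append_iff _ _).mpr (Or.inl hγ₁)))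
    · exact Or.inr (hP₂.eq_of_mem_support_append hγ₁ hγ)
  have cross : ∀ α β, α ∈ P₁.support ∨ α ∈ B₂.support → β ∈ Q.support → G.Adj α β →
      s(α, β) = s(a, u) ∨ s(α, β) = s(b, u) := by
    rintro α β hα hβ hαβ
    obtain rfl := hnbr β hβ α (mem_P α hα) hαβ.symm
    rcases hα with hα | hα
    · rw [hfirst α hα hαβ.symm]; exact Or.inl rfl
    · rw [hlast α hα hαβ.symm]; exact Or.inr rfl
  intro α β hα hβ hαβ
  simp only [support_reverse, List.mem_reverse, edges_reverse] at hα hβ ⊢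
  rcases or_assoc.mpr hα with hα | hα <;> rcases or_assoc.mpr hβ with hβ | hβ
  · have := hPc.mem_edges (mem_P α hα) (mem_P β hβ) hαβ
    simp only [edges_append, List.mem_append] at this
    rcases this with h | h | h
    · exact Or.inl h
    · have hab : s(α, β) = s(a, b) := by
        rcases mem_B₁ α hα (B₁.fst_mem_support_of_mem_edges h) with rfl | rfl <;>
          rcases mem_B₁ β hβ (B₁.snd_mem_support_of_mem_edges h) with rfl | rfl
        all_goals first | rfl | exact Sym2.eq_swap | exact absurd hαβ G.irrefl
      exact Or.inr (Or.inr (Or.inr (Or.inl hab)))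
    · exact Or.inr (Or.inl h)
  · rcases cross α β hα hβ hαβ with h | h <;> simp [h]
  · rcases cross β α hβ hα hαβ.symm with h | h <;> rw [Sym2.eq_swap] at h <;> simp [h]
  · exact Or.inr (Or.inr (Or.inl (hQc.mem_edges hα hβ hαβ)))

theorem hasInducedGeneralizedClaw_or_net_of_attached {u : V} {P : G.Walk z₁ z₂}
    {Q : G.Walk u z₃} (hP : P.IsPath) (hPc : P.IsChordless) (hQ : Q.IsPath)
    (hQc : Q.IsChordless) (hQP : ∀ y ∈ Q.support, y ∉ P.support)
    (hnbr : ∀ y ∈ Q.support, ∀ p ∈ P.support, G.Adj y p → y = u)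
    (hu : ∃ p ∈ P.support, G.Adj u p) :
    HasInducedGeneralizedClaw G z₁ z₂ z₃ ∨ HasInducedGeneralizedNet G z₁ z₂ z₃ := by
  obtain ⟨a, P₁, P₂, rfl, hua, hfirst⟩ := P.exists_eq_append_first (G.Adj u) hu
  obtain ⟨b, B₁, B₂, rfl, hub, hlast⟩ :=
    P₂.exists_eq_append_last (G.Adj u) ⟨a, P₂.start_mem_support, hua⟩
  have hP₂ : (B₁.append B₂).IsPath := hP.of_append_right
  have h₁₂ : ∀ y ∈ P₁.reverse.support, y ∈ B₂.support → y = a ∧ y = b := by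
    intro y hy₁ hy₂
    obtain rfl : y = a := hP.eq_of_mem_support_append (by simpa using hy₁)
      ((mem_support_append_iff _ _).mpr (Or.inr hy₂))
    exact ⟨rfl, hP₂.eq_of_mem_support_append B₁.start_mem_support hy₂⟩
  refine (isInducedLegs_of_append hP hPc hQc hnbr hfirst hlast).hasInducedGeneralizedClaw_or_net
    hP.of_append_left.reverse hP₂.of_append_right hQ h₁₂ ?_ ?_ hua.symm hub.symm
  · intro y hy hyQ
    exact hQP y hyQ (by simp_all [mem_support_append_iff])
  · intro y hy hyQ
    exact hQP y hyQ (by simp [mem_support_append_iff, hy])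

theorem exists_attached_path (hconn : G.Connected) (P : G.Walk z₁ z₂) (hz₃ : z₃ ∉ P.support) :
    ∃ (u : V) (Q : G.Walk u z₃), Q.IsPath ∧ Q.IsChordless ∧ (∀ y ∈ Q.support, y ∉ P.support) ∧
      (∀ y ∈ Q.support, ∀ p ∈ P.support, G.Adj y p → y = u) ∧ ∃ p ∈ P.support, G.Adj u p := by
  classical
  obtain ⟨t, ht, hmin⟩ := P.support.toFinset.exists_min_image (G.dist · z₃) ⟨z₁, by simp⟩
  rw [List.mem_toFinset] at ht
  obtain ⟨R, hR⟩ := hconn.exists_walk_length_eq_dist t z₃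
  cases R with
  | nil => exact absurd ht hz₃
  | @cons _ u _ htu Q =>
    have hQ : Q.length = G.dist u z₃ := length_eq_dist_of_subwalk hR (isSubwalk_cons Q htu)
    have hfar : ∀ y (Q₁ : G.Walk u y) (Q₂ : G.Walk y z₃), Q = Q₁.append Q₂ →
        ∀ p ∈ P.support, Q₁.length + 1 ≤ G.dist p y := by
      intro y Q₁ Q₂ hQ₁₂ p hp
      have h₁ := hmin p (List.mem_toFinset.mpr hp)
      have h₂ := hconn.dist_triangle (u := p) (v := y) (w := z₃)
      have h₃ := dist_le Q₂
      simp only [hQ₁₂, length_cons, length_append] at hR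
      omega
    refine ⟨u, Q, Q.isPath_of_length_eq_dist hQ, Q.isChordless_of_length_eq_dist hQ, ?_, ?_,
      t, ht, htu.symm⟩
    · intro y hy hyP
      obtain ⟨Q₁, Q₂, hQ₁₂⟩ := mem_support_iff_exists_append.mp hy
      simpa using hfar y Q₁ Q₂ hQ₁₂ y hyP
    · intro y hy p hp hyp
      obtain ⟨Q₁, Q₂, hQ₁₂⟩ := mem_support_iff_exists_append.mp hy
      have h₁ := hfar y Q₁ Q₂ hQ₁₂ p hp
      have h₂ : G.dist p y ≤ 1 := by simpa using dist_le hyp.symm.toWalk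
      exact (eq_of_length_eq_zero (p := Q₁) (by omega)).symm

theorem hasInducedGeneralizedClaw_of_mem_support {P : G.Walk z₁ z₂} (hP : P.IsPath)
    (hPc : P.IsChordless) (hz₃ : z₃ ∈ P.support) : HasInducedGeneralizedClaw G z₁ z₂ z₃ := by
  obtain ⟨C₁, C₂, rfl⟩ := mem_support_iff_exists_append.mp hz₃
  refine hasInducedGeneralizedClaw_of_forall_adj (Q₃ := nil) hP.of_append_left.reverse
    hP.of_append_right IsPath.nil
    (fun y hy₁ hy₂ => hP.eq_of_mem_support_append (by simpa using hy₁) hy₂) (by simp) (by simp)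
    fun α β hα hβ hαβ => ?_
  have hsub : ∀ γ, (γ ∈ C₁.reverse.support ∨ γ ∈ C₂.support ∨ γ ∈ (nil : G.Walk z₃ z₃).support) →
      γ ∈ (C₁.append C₂).support := by
    intro γ hγ
    simp only [support_reverse, List.mem_reverse, support_nil, List.mem_singleton] at hγ
    rcases hγ with hγ | hγ | hγ <;> simp [mem_support_append_iff, hγ]
  have := hPc.mem_edges (hsub α hα) (hsub β hβ) hαβ
  simpa [edges_append] using this

end ClawNet

theorem induced_generalized_claw_or_net_general {V : Type*} (G : SimpleGraph V)
    (hconn : G.Connected) (z₁ z₂ z₃ : V) :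
    HasInducedGeneralizedClaw G z₁ z₂ z₃ ∨ HasInducedGeneralizedNet G z₁ z₂ z₃ := by
  obtain ⟨P, hP⟩ := hconn.exists_walk_length_eq_dist z₁ z₂
  have hPpath := P.isPath_of_length_eq_dist hP
  have hPc := P.isChordless_of_length_eq_dist hP
  by_cases hz₃ : z₃ ∈ P.support
  · exact Or.inl (ClawNet.hasInducedGeneralizedClaw_of_mem_support hPpath hPc hz₃)
  obtain ⟨u, Q, hQ, hQc, hQP, hnbr, hu⟩ := ClawNet.exists_attached_path hconn P hz₃
  exact ClawNet.hasInducedGeneralizedClaw_or_net_of_attached hPpath hPc hQ hQc hQP hnbr hu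

theorem induced_generalized_claw_or_net {V : Type*} (G : SimpleGraph V)
    (hconn : G.Connected) (z₁ z₂ z₃ : V)
    (h12 : z₁ ≠ z₂) (h13 : z₁ ≠ z₃) (h23 : z₂ ≠ z₃) :
    HasInducedGeneralizedClaw G z₁ z₂ z₃ ∨ HasInducedGeneralizedNet G z₁ z₂ z₃ :=
  induced_generalized_claw_or_net_general G hconn z₁ z₂ z₃
end

section
/- Every graph in the class 𝒞₃ᴺᑫ is Hamiltonian: let K be a complete graph with at least 4 vertices, let b₂a₂a₃b₃ be a path of length three vertex-disjoint from K, choose three distinct vertices a₁, c₂, c₃ in K, and add the edges c₂b₂, a₁a₂, a₁a₃, c₃b₃. The resulting graph has a Hamiltonian cycle. -/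
/-!
The cycle is `a₁ a₂ b₂ c₂ ⋯ c₃ b₃ a₃ a₁`, where `c₂ ⋯ c₃` is a Hamiltonian path of the clique
`K \ {a₁}`; any ordering of its remaining vertices will do.
-/

namespace SimpleGraph

variable {V : Type*} {G : SimpleGraph V}

theorem Walk.IsHamiltonian.isHamiltonian_of_adj [Fintype V] [DecidableEq V] {u v : V}
    {p : G.Walk u v} (hp : p.IsHamiltonian) (hvu : G.Adj v u) (hlen : p.length ≠ 1) :
    G.IsHamiltonian := by
  refine fun _ ↦ ⟨v, .cons hvu p,
    Walk.isHamiltonianCycle_iff_isCycle_and_support_count_tail_eq_one.2 ⟨?_, hp⟩⟩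
  refine (Walk.cons_isCycle_iff p hvu).2 ⟨hp.isPath, fun he ↦ hlen ?_⟩
  exact hp.isPath.length_eq_one_of_mem_edges (Sym2.eq_swap ▸ he)

theorem IsClique.exists_isPath_forall_mem_support_iff {S : Set V} (hS : G.IsClique S)
    (hfin : S.Finite) {x y : V} (hx : x ∈ S) (hy : y ∈ S) (hxy : x ≠ y) :
    ∃ p : G.Walk x y, p.IsPath ∧ ∀ v, v ∈ p.support ↔ v ∈ S := by
  classical
  set l := x :: ((hfin.toFinset \ {x, y}).toList ++ [y])
  have hmem : ∀ v, v ∈ l ↔ v ∈ S := by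
    intro v
    by_cases hvx : v = x <;> by_cases hvy : v = y <;> simp [l, hvx, hvy, hx, hy]
  have hnodup : l.Nodup := by
    simp [l, List.nodup_append, hxy, Finset.nodup_toList]
  have hchain : l.IsChain G.Adj :=
    (hnodup.pairwise_of_set_pairwise ((Set.Pairwise.mono fun v hv ↦ (hmem v).1 hv) hS)).isChain
  obtain ⟨p, hp⟩ : ∃ p : G.Walk x y, p.support = l :=
    ⟨(Walk.ofSupport l (List.cons_ne_nil _ _) hchain).copy rfl (by simp [l]),
      (Walk.support_copy _ _ _).trans (Walk.support_ofSupport _ _)⟩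
  exact ⟨p, .mk' (hp ▸ hnodup), hp ▸ hmem⟩

end SimpleGraph

theorem C3NQ_hamiltonian_general {V : Type*} [Fintype V] [DecidableEq V]
    (G : SimpleGraph V) (K : Set V) (a₁ c₂ c₃ b₂ a₂ a₃ b₃ : V)
    (ha₁ : a₁ ∈ K) (hc₂ : c₂ ∈ K) (hc₃ : c₃ ∈ K)
    (h12 : a₁ ≠ c₂) (h13 : a₁ ≠ c₃) (h23 : c₂ ≠ c₃)
    (hb₂ : b₂ ∉ K) (ha₂ : a₂ ∉ K) (ha₃ : a₃ ∉ K) (hb₃ : b₃ ∉ K)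
    (hdist : [b₂, a₂, a₃, b₃].Nodup)
    (hcover : K ∪ {b₂, a₂, a₃, b₃} = Set.univ)
    (hadj : ∀ u v : V, G.Adj u v ↔ u ≠ v ∧
      ((u ∈ K ∧ v ∈ K) ∨
        s(u, v) ∈ ({s(b₂, a₂), s(a₂, a₃), s(a₃, b₃),
          s(c₂, b₂), s(a₁, a₂), s(a₁, a₃), s(c₃, b₃)} : Set (Sym2 V)))) :
    G.IsHamiltonian := by
  obtain ⟨⟨hb₂a₂, hb₂a₃, hb₂b₃⟩, ⟨ha₂a₃, ha₂b₃⟩, ha₃b₃⟩ : (b₂ ≠ a₂ ∧ b₂ ≠ a₃ ∧ b₂ ≠ b₃) ∧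
      (a₂ ≠ a₃ ∧ a₂ ≠ b₃) ∧ a₃ ≠ b₃ := by simpa using hdist
  have hne : ∀ {u v}, u ∈ K → v ∉ K → u ≠ v := fun hu hv h ↦ hv (h ▸ hu)
  have hK : G.IsClique K := fun u hu v hv huv ↦ (hadj u v).2 ⟨huv, .inl ⟨hu, hv⟩⟩
  have hadd : ∀ {u v}, u ≠ v → s(u, v) ∈ ({s(b₂, a₂), s(a₂, a₃), s(a₃, b₃),
      s(c₂, b₂), s(a₁, a₂), s(a₁, a₃), s(c₃, b₃)} : Set (Sym2 V)) → G.Adj u v :=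
    fun huv he ↦ (hadj _ _).2 ⟨huv, .inr he⟩
  obtain ⟨q, hq, hqK⟩ := (hK.subset Set.sdiff_subset).exists_isPath_forall_mem_support_iff
    (Set.toFinite (K \ {a₁})) ⟨hc₂, h12.symm⟩ ⟨hc₃, h13.symm⟩ h23
  let p : G.Walk a₂ a₁ := .cons (hadd hb₂a₂.symm (by simp [Sym2.eq_swap]))
    (.cons (hadd (hne hc₂ hb₂).symm (by simp [Sym2.eq_swap])) (q.append
      (.cons (hadd (hne hc₃ hb₃) (by simp)) (.cons (hadd ha₃b₃.symm (by simp [Sym2.eq_swap]))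
        (.cons (hadd (hne ha₁ ha₃).symm (by simp [Sym2.eq_swap])) .nil)))))
  have hp : p.support = a₂ :: b₂ :: (q.support ++ [b₃, a₃, a₁]) := by
    simp [p, SimpleGraph.Walk.support_append]
  suffices p.IsHamiltonian from this.isHamiltonian_of_adj (hadd (hne ha₁ ha₂) (by simp))
    (by simp [p])
  refine SimpleGraph.Walk.IsPath.isHamiltonian_of_mem (.mk' ?_) fun v ↦ ?_
  · simp only [hp, List.nodup_cons, List.nodup_append, List.mem_cons, List.mem_append, hqK,
      Set.mem_sdiff, Set.mem_singleton_iff]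
    grind [hq.support_nodup]
  · have hv : v ∈ K ∪ {b₂, a₂, a₃, b₃} := hcover ▸ Set.mem_univ v
    simp only [hp, List.mem_cons, List.mem_append, hqK, Set.mem_sdiff, Set.mem_singleton_iff]
    grind

/-- Every graph in the class `𝒞₃ᴺᑫ` is hamiltonian: a complete graph `K` on at least
4 vertices, a path `b₂ a₂ a₃ b₃` outside `K`, three distinct vertices `a₁, c₂, c₃ ∈ K`,
with the extra edges `c₂b₂`, `a₁a₂`, `a₁a₃`, `c₃b₃`. -/
theorem C3NQ_hamiltonian {V : Type*} [Fintype V] [DecidableEq V]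
    (G : SimpleGraph V) (K : Set V) (a₁ c₂ c₃ b₂ a₂ a₃ b₃ : V)
    (hK : 4 ≤ K.ncard)
    (ha₁ : a₁ ∈ K) (hc₂ : c₂ ∈ K) (hc₃ : c₃ ∈ K)
    (h12 : a₁ ≠ c₂) (h13 : a₁ ≠ c₃) (h23 : c₂ ≠ c₃)
    (hb₂ : b₂ ∉ K) (ha₂ : a₂ ∉ K) (ha₃ : a₃ ∉ K) (hb₃ : b₃ ∉ K)
    (hdist : [b₂, a₂, a₃, b₃].Nodup)
    (hcover : K ∪ {b₂, a₂, a₃, b₃} = Set.univ)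
    (hadj : ∀ u v : V, G.Adj u v ↔ u ≠ v ∧
      ((u ∈ K ∧ v ∈ K) ∨
        s(u, v) ∈ ({s(b₂, a₂), s(a₂, a₃), s(a₃, b₃),
          s(c₂, b₂), s(a₁, a₂), s(a₁, a₃), s(c₃, b₃)} : Set (Sym2 V)))) :
    G.IsHamiltonian :=
  C3NQ_hamiltonian_general G K a₁ c₂ c₃ b₂ a₂ a₃ b₃ ha₁ hc₂ hc₃ h12 h13 h23 hb₂ ha₂ ha₃ hb₃ hdist
    hcover hadj
end
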